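/- arXiv:1602.07961 — 2 statements merged into one kernel-verified Lean document; each statement's English description precedes it below -/
import Mathlib

section
/- With notation as above (A₁ = (x, Φ₁(x)), A₂ = A₁ + c(∇Φ₁(x), (−1+|∇Φ₁(x)|²)/2), A₀ = (x + c∇Φ₁(x), Φ₁(x)), c > 0), if |∇Φ₁(x)| ≤ 1 then |A₁A₂| + |A₀A₂| = c, and if |∇Φ₁(x)| ≥ 1 then |A₁A₂| − |A₀A₂| = c. In particular the signed sum |A₁A₂| ± |A₀A₂| (sign + if A₂ lies below A₀, − otherwise) is constant equal to c, independent of x. -/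
/-- Euclidean distance between points of ℝ^{n+1} written as pairs (y, z). -/
noncomputable def dist2 {n : ℕ} (P Q : EuclideanSpace ℝ (Fin n) × ℝ) : ℝ :=
  Real.sqrt (‖P.1 - Q.1‖ ^ 2 + (P.2 - Q.2) ^ 2)

/-- The signed sum of lengths |A₁A₂| ± |A₀A₂| is constant equal to c. -/
theorem stmt_2 (n : ℕ) (c : ℝ) (hc : 0 < c)
    (Φ₁ : EuclideanSpace ℝ (Fin n) → ℝ) (hΦ : ContDiff ℝ (⊤ : ℕ∞) Φ₁)
    (x : EuclideanSpace ℝ (Fin n)) :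
    let A₀ : EuclideanSpace ℝ (Fin n) × ℝ := (x + c • gradient Φ₁ x, Φ₁ x)
    let A₁ : EuclideanSpace ℝ (Fin n) × ℝ := (x, Φ₁ x)
    let A₂ : EuclideanSpace ℝ (Fin n) × ℝ :=
      (A₁.1 + c • gradient Φ₁ x, A₁.2 + c * ((-1 + ‖gradient Φ₁ x‖ ^ 2) / 2))
    (‖gradient Φ₁ x‖ ≤ 1 → dist2 A₁ A₂ + dist2 A₀ A₂ = c) ∧
    (1 ≤ ‖gradient Φ₁ x‖ → dist2 A₁ A₂ - dist2 A₀ A₂ = c) := by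
  intro A₀ A₁ A₂
  set t : ℝ := ‖gradient Φ₁ x‖ with ht
  have ht0 : 0 ≤ t := norm_nonneg _
  have h1 : dist2 A₁ A₂ = c * (t ^ 2 + 1) / 2 := by
    have hx : A₁.1 - A₂.1 = -(c • gradient Φ₁ x) := by
      simp [A₁, A₂]
    have : ‖A₁.1 - A₂.1‖ ^ 2 + (A₁.2 - A₂.2) ^ 2 = (c * (t ^ 2 + 1) / 2) ^ 2 := by
      rw [hx, norm_neg, norm_smul, mul_pow]
      simp only [A₁, A₂]
      rw [← ht]
      rw [Real.norm_eq_abs, sq_abs]; ring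
    rw [dist2, this, Real.sqrt_sq]
    positivity
  have h0 : dist2 A₀ A₂ = c * |t ^ 2 - 1| / 2 := by
    have hx : A₀.1 - A₂.1 = 0 := by simp [A₀, A₂, A₁]
    have : ‖A₀.1 - A₂.1‖ ^ 2 + (A₀.2 - A₂.2) ^ 2 = (c * |t ^ 2 - 1| / 2) ^ 2 := by
      rw [hx, norm_zero]
      simp only [A₀, A₂]
      rw [← ht, div_pow, mul_pow, sq_abs]
      ring
    rw [dist2, this, Real.sqrt_sq]
    positivity
  constructor
  · intro h
    have habs : |t ^ 2 - 1| = 1 - t ^ 2 := by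
      rw [abs_of_nonpos (by nlinarith)]; ring
    rw [h1, h0, habs]; ring
  · intro h
    have habs : |t ^ 2 - 1| = t ^ 2 - 1 := by
      rw [abs_of_nonneg (by nlinarith)]
    rw [h1, h0, habs]; ring
end

section
/- The map f(x₁,x₂) = e^{x₂}(x₁,x₂) cannot be written, on any neighborhood of the origin, as a composition ∇ψ ∘ ∇φ of two gradient local diffeomorphisms: if ∇u ∘ f = ∇φ near 0 with u, φ twice continuously differentiable and ∇u a local diffeomorphism, a contradiction follows. Specifically, the compatibility condition forces ξ ∂²₁₁u(ξ,η) + η ∂²₁₂u(ξ,η) = 0 near (0,0), whence ∂₁u is locally constant and ∇u has singular derivative. -/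
/-
Write f x = e^{x₂} • x, a local diffeomorphism at 0 with derivative the identity there, and
H = D²u. Differentiating Du ∘ f = Dφ gives H(f x) ∘ Df(x) = D²φ(x), which is symmetric; combined
with the symmetry of H this is the Euler equation H(p)(p)(e₁) = 0 on a ball around 0 = f 0.
Thus ∂₁u is constant along rays, hence constant on the ball, so ∂₁₂u = 0 and ∂₂u is constant
along the ξ-axis: ∇u takes the same value at 0 and at (δ/2, 0), contradicting injectivity.
-/

open Set Metric Filter Topology

section StarConvex

variable {E : Type*} [NormedAddCommGroup E] [NormedSpace ℝ E] {s : Set E} {G : E → ℝ}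
  {G' : E → E →L[ℝ] ℝ} {p : E}

theorem StarConvex.eq_of_hasFDerivAt_apply_eq_zero (hs : StarConvex ℝ 0 s) (hp : p ∈ s)
    (hG : ∀ q ∈ s, HasFDerivAt G (G' q) q) (hG' : ∀ t ∈ Ioo (0 : ℝ) 1, G' (t • p) p = 0) :
    G p = G 0 := by
  have hmem : ∀ t ∈ Icc (0 : ℝ) 1, t • p ∈ s := fun t ht => hs.smul_mem hp ht.1 ht.2
  have hderiv : ∀ t ∈ Icc (0 : ℝ) 1, HasDerivAt (fun t : ℝ => G (t • p)) (G' (t • p) p) t :=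
    fun t ht => by
      simpa [Function.comp_def] using
        (hG _ (hmem t ht)).comp_hasDerivAt t ((hasDerivAt_id t).smul_const p)
  obtain ⟨c, hc, hslope⟩ := exists_hasDerivAt_eq_slope (fun t : ℝ => G (t • p))
    (fun t => G' (t • p) p) zero_lt_one
    (fun t ht => (hderiv t ht).continuousAt.continuousWithinAt)
    (fun t ht => hderiv t (Ioo_subset_Icc_self ht))
  rw [hG' c hc] at hslope
  simpa [sub_eq_zero, eq_comm] using hslope

theorem StarConvex.eq_of_hasFDerivAt_apply_self_eq_zero (hs : StarConvex ℝ 0 s) (hp : p ∈ s)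
    (hG : ∀ q ∈ s, HasFDerivAt G (G' q) q) (hG' : ∀ q ∈ s, G' q q = 0) :
    G p = G 0 := by
  refine hs.eq_of_hasFDerivAt_apply_eq_zero hp hG fun t ht => ?_
  have h := hG' _ (hs.smul_mem hp ht.1.le ht.2.le)
  rw [map_smul, smul_eq_mul] at h
  exact (mul_eq_zero.1 h).resolve_left ht.1.ne'

end StarConvex

section SecondDerivative

variable {E F : Type*} [NormedAddCommGroup E] [NormedSpace ℝ E] [NormedAddCommGroup F]
  [NormedSpace ℝ F]

theorem ContDiffAt.hasFDerivAt_fderiv {u : E → F} {q : E} (hu : ContDiffAt ℝ 2 u q) :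
    HasFDerivAt (fderiv ℝ u) (fderiv ℝ (fderiv ℝ u) q) q :=
  ((hu.fderiv_right le_rfl).differentiableAt one_ne_zero).hasFDerivAt

theorem ContDiffAt.hasFDerivAt_fderiv_apply {u : E → F} {q : E} (hu : ContDiffAt ℝ 2 u q)
    (v : E) : HasFDerivAt (fun y => fderiv ℝ u y v) ((fderiv ℝ (fderiv ℝ u) q).flip v) q := by
  simpa using hu.hasFDerivAt_fderiv.clm_apply (hasFDerivAt_const v q)

theorem HasFDerivAt.fderiv_fderiv_comp_symm {f : E → E} {f' : E →L[ℝ] E} {u φ : E → ℝ} {x : E}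
    (hf : HasFDerivAt f f' x) (hu : ContDiffAt ℝ 2 u (f x)) (hφ : ContDiffAt ℝ 2 φ x)
    (h : ∀ᶠ y in 𝓝 x, fderiv ℝ u (f y) = fderiv ℝ φ y) (v w : E) :
    fderiv ℝ (fderiv ℝ u) (f x) (f' v) w = fderiv ℝ (fderiv ℝ u) (f x) (f' w) v := by
  have hcomp : (fderiv ℝ (fderiv ℝ u) (f x)).comp f' = fderiv ℝ (fderiv ℝ φ) x :=
    (hu.hasFDerivAt_fderiv.comp x hf).unique (hφ.hasFDerivAt_fderiv.congr_of_eventuallyEq h)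
  simpa only [← hcomp, ContinuousLinearMap.comp_apply] using hφ.isSymmSndFDerivAt (by simp) v w

end SecondDerivative

theorem hasStrictFDerivAt_exp_snd_smul (x : ℝ × ℝ) :
    HasStrictFDerivAt (fun y : ℝ × ℝ => Real.exp y.2 • y)
      (Real.exp x.2 • ContinuousLinearMap.id ℝ (ℝ × ℝ)
        + (Real.exp x.2 • ContinuousLinearMap.snd ℝ ℝ ℝ).smulRight x) x :=
  ((Real.hasStrictDerivAt_exp x.2).comp_hasStrictFDerivAt x hasStrictFDerivAt_snd).smul
    (hasStrictFDerivAt_id x)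

theorem exp_snd_smul_image_mem_nhds {U : Set (ℝ × ℝ)} (hU : U ∈ 𝓝 0) :
    (fun y : ℝ × ℝ => Real.exp y.2 • y) '' U ∈ 𝓝 0 := by
  have h := hasStrictFDerivAt_exp_snd_smul 0
  have hid : Real.exp (0 : ℝ × ℝ).2 • ContinuousLinearMap.id ℝ (ℝ × ℝ)
      + (Real.exp (0 : ℝ × ℝ).2 • ContinuousLinearMap.snd ℝ ℝ ℝ).smulRight 0
      = (ContinuousLinearEquiv.refl ℝ (ℝ × ℝ) : ℝ × ℝ →L[ℝ] ℝ × ℝ) := by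
    ext <;> simp
  rw [hid] at h
  have := image_mem_map (m := fun y : ℝ × ℝ => Real.exp y.2 • y) hU
  rwa [h.map_nhds_eq_of_equiv, smul_zero] at this

/-- Since Df(x) e₁ = e^{x₂} e₁ and Df(x) e₂ = e^{x₂} (e₂ + x), the symmetry of
H(f x) ∘ Df(x) reads ξ ∂²₁₁u + η ∂²₁₂u = 0 at (ξ, η) = f x. -/
theorem fderiv_fderiv_apply_self_fst_eq_zero {u φ : ℝ × ℝ → ℝ} {x : ℝ × ℝ}
    (hu : ContDiffAt ℝ 2 u (Real.exp x.2 • x)) (hφ : ContDiffAt ℝ 2 φ x)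
    (h : ∀ᶠ y in 𝓝 x, fderiv ℝ u (Real.exp y.2 • y) = fderiv ℝ φ y) :
    fderiv ℝ (fderiv ℝ u) (Real.exp x.2 • x) (Real.exp x.2 • x) (1, 0) = 0 := by
  have hsymm := (hasStrictFDerivAt_exp_snd_smul x).hasFDerivAt.fderiv_fderiv_comp_symm
    hu hφ h (1, 0) (0, 1)
  set H := fderiv ℝ (fderiv ℝ u) (Real.exp x.2 • x)
  have hH : H (0, 1) (1, 0) = H (1, 0) (0, 1) := hu.isSymmSndFDerivAt (by simp) _ _
  simp only [add_apply, FunLike.coe_smul, Pi.smul_apply,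
    ContinuousLinearMap.smulRight_apply, ContinuousLinearMap.id_apply,
    ContinuousLinearMap.coe_snd', map_add, map_smul, smul_eq_mul, mul_one, mul_zero, zero_smul,
    add_zero] at hsymm
  rw [hH] at hsymm
  have hx : Real.exp x.2 * H x (1, 0) = 0 := by linarith
  rw [map_smul, smul_apply, smul_eq_mul, hx]

theorem fderiv_eq_of_fderiv_fderiv_apply_self_fst_eq_zero {u : ℝ × ℝ → ℝ} {s : Set (ℝ × ℝ)}
    (hs : IsOpen s) (hs₀ : StarConvex ℝ 0 s) (hu : ContDiffOn ℝ 2 u s)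
    (h : ∀ p ∈ s, fderiv ℝ (fderiv ℝ u) p p (1, 0) = 0) {r : ℝ} (hr : (r, 0) ∈ s) :
    fderiv ℝ u (r, 0) = fderiv ℝ u 0 := by
  have hu' : ∀ q ∈ s, ContDiffAt ℝ 2 u q := fun q hq => hu.contDiffAt (hs.mem_nhds hq)
  have hG : ∀ v, ∀ q ∈ s, HasFDerivAt (fun y => fderiv ℝ u y v)
      ((fderiv ℝ (fderiv ℝ u) q).flip v) q := fun v q hq => (hu' q hq).hasFDerivAt_fderiv_apply v
  have h₁ : ∀ p ∈ s, fderiv ℝ u p (1, 0) = fderiv ℝ u 0 (1, 0) :=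
    fun p hp => hs₀.eq_of_hasFDerivAt_apply_self_eq_zero hp (hG (1, 0)) h
  have hmixed : ∀ q ∈ s, fderiv ℝ (fderiv ℝ u) q (1, 0) (0, 1) = 0 := by
    intro q hq
    have hconst : HasFDerivAt (fun y => fderiv ℝ u y (1, 0)) (0 : ℝ × ℝ →L[ℝ] ℝ) q :=
      (hasFDerivAt_const (fderiv ℝ u 0 (1, 0)) q).congr_of_eventuallyEq
        (eventually_of_mem (hs.mem_nhds hq) h₁)
    have := congrArg (· (0, 1)) ((hG (1, 0) q hq).unique hconst)
    simpa [(hu' q hq).isSymmSndFDerivAt (by simp) (1, 0) (0, 1)] using this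
  have h₂ : fderiv ℝ u (r, 0) (0, 1) = fderiv ℝ u 0 (0, 1) := by
    refine hs₀.eq_of_hasFDerivAt_apply_eq_zero hr (hG (0, 1)) fun t ht => ?_
    have hq := hs₀.smul_mem hr ht.1.le ht.2.le
    generalize t • ((r, 0) : ℝ × ℝ) = q at hq ⊢
    have hr' : ((r, 0) : ℝ × ℝ) = r • ((1 : ℝ), (0 : ℝ)) := by simp
    rw [ContinuousLinearMap.flip_apply, hr', map_smul, smul_apply, hmixed _ hq, smul_zero]
  ext
  exacts [h₁ _ hr, h₂]

/-- The map f(x₁,x₂) = e^{x₂}(x₁,x₂) is not, on any neighborhood of the origin,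
a composition ∇ψ ∘ ∇φ of two gradient local diffeomorphisms: if ∇u ∘ f = ∇φ near
0 with ∇u injective near f(0) = 0, a contradiction follows. Gradients are written
as (∂₁·, ∂₂·) via Fréchet derivatives. -/
theorem stmt_9 :
    let f : ℝ × ℝ → ℝ × ℝ := fun x => (x.1 * Real.exp x.2, x.2 * Real.exp x.2)
    let grad : (ℝ × ℝ → ℝ) → (ℝ × ℝ) → ℝ × ℝ :=
      fun w p => (fderiv ℝ w p (1, 0), fderiv ℝ w p (0, 1))
    ¬ ∃ (U : Set (ℝ × ℝ)) (u φ : ℝ × ℝ → ℝ), IsOpen U ∧ (0, 0) ∈ U ∧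
        ContDiffOn ℝ 2 φ U ∧ ContDiffOn ℝ 2 u (f '' U) ∧
        (∀ x ∈ U, grad u (f x) = grad φ x) ∧
        Set.InjOn (grad u) (f '' U) := by
  intro f grad ⟨U, u, φ, hU, hU₀, hφ, hu, hgrad, hinj⟩
  have hf : f = fun x => Real.exp x.2 • x := by
    funext x
    ext <;> simp [f, mul_comm]
  rw [hf] at hu hgrad hinj
  obtain ⟨δ, hδ, hball⟩ := Metric.mem_nhds_iff.1 (exp_snd_smul_image_mem_nhds (hU.mem_nhds hU₀))
  have hu' : ContDiffOn ℝ 2 u (ball 0 δ) := hu.mono hball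
  have hpde : ∀ p ∈ ball (0 : ℝ × ℝ) δ, fderiv ℝ (fderiv ℝ u) p p (1, 0) = 0 := by
    intro p hp
    obtain ⟨x, hx, rfl⟩ := hball hp
    refine fderiv_fderiv_apply_self_fst_eq_zero (hu'.contDiffAt (isOpen_ball.mem_nhds hp))
      (hφ.contDiffAt (hU.mem_nhds hx)) ?_
    filter_upwards [hU.mem_nhds hx] with y hy
    have := Prod.ext_iff.1 (hgrad y hy)
    ext
    exacts [this.1, this.2]
  have hr : ((δ / 2, 0) : ℝ × ℝ) ∈ ball 0 δ := by
    simp [abs_of_pos hδ, hδ]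
  have hfderiv := fderiv_eq_of_fderiv_fderiv_apply_self_fst_eq_zero isOpen_ball
    ((convex_ball 0 δ).starConvex (mem_ball_self hδ)) hu' hpde hr
  have := hinj (hball hr) (hball (mem_ball_self hδ)) (by simp [grad, hfderiv])
  simp [Prod.ext_iff, hδ.ne'] at this
end
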